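/- arXiv:1508.07565 — 5 statements merged into one kernel-verified Lean document; each statement's English description precedes it below -/
import Mathlib

section
/- Let σ, r, b be real parameters with σ ≠ 0 and r ≠ 1, and let (x, y, z) : ℝ → ℝ³ be a differentiable solution of the classical Lorenz system x' = -σ(x - y), y' = r x - y - x z, z' = -b z + x y. Then the functions X = x/√2, Y = σ(y - x)/√2, Z = (z - x²/(2σ))/(r - 1) solve the extended Lorenz model X' = Y, Y' = -λ Y + γ X (1 - Z) - δ X³, Z' = -α Z + β X² with parameters α = b, β = (2σ - b)/(σ(r - 1)), γ = σ(r - 1), δ = 1, λ = σ + 1. -/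
/-! By the chain rule, `X'`, `Y'`, `Z'` are polynomials in `x, y, z` once the Lorenz equations
are substituted, and it remains to compare them with the right-hand sides of the extended model.
The correction `x² / (2σ)` in `Z` is chosen so that its derivative `x x' / σ` cancels the `x y`
term of `z'`; in return it puts a cubic term `x³ / (2√2)` into `γ X (1 - Z)`, which is what
`δ X³` with `δ = 1` removes. -/

open Real

section
variable {σ r b t : ℝ} {x y z : ℝ → ℝ}

theorem hasDerivAt_lorenz_X (c : ℝ) (hx : HasDerivAt x (-σ * (x t - y t)) t) :
    HasDerivAt (fun s => x s / c) (σ * (y t - x t) / c) t :=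
  (hx.div_const c).congr_deriv (by ring)

theorem hasDerivAt_lorenz_Y (hσ : σ ≠ 0) (hr : r ≠ 1)
    (hx : HasDerivAt x (-σ * (x t - y t)) t)
    (hy : HasDerivAt y (r * x t - y t - x t * z t) t) :
    HasDerivAt (fun s => σ * (y s - x s) / √2)
      (-(σ + 1) * (σ * (y t - x t) / √2)
        + σ * (r - 1) * (x t / √2) * (1 - (z t - x t ^ 2 / (2 * σ)) / (r - 1))
        - 1 * (x t / √2) ^ 3) t := by
  have hsqrt : √2 ^ 2 = 2 := sq_sqrt zero_le_two
  have hr' : r - 1 ≠ 0 := sub_ne_zero.mpr hr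
  refine (((hy.sub hx).const_mul σ).div_const √2).congr_deriv ?_
  field_simp
  linear_combination -x t ^ 3 * hsqrt

theorem hasDerivAt_lorenz_Z (hσ : σ ≠ 0) (hr : r ≠ 1)
    (hx : HasDerivAt x (-σ * (x t - y t)) t)
    (hz : HasDerivAt z (-b * z t + x t * y t) t) :
    HasDerivAt (fun s => (z s - x s ^ 2 / (2 * σ)) / (r - 1))
      (-b * ((z t - x t ^ 2 / (2 * σ)) / (r - 1))
        + (2 * σ - b) / (σ * (r - 1)) * (x t / √2) ^ 2) t := by
  have hsqrt : √2 ^ 2 = 2 := sq_sqrt zero_le_two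
  have hr' : r - 1 ≠ 0 := sub_ne_zero.mpr hr
  refine ((hz.sub ((hx.pow 2).div_const (2 * σ))).div_const (r - 1)).congr_deriv ?_
  field_simp
  linear_combination (2 * σ * x t ^ 2 - b * x t ^ 2) * hsqrt

end

/-- The coordinate change taking the classical Lorenz system to the
extended Lorenz model. -/
theorem classical_lorenz_to_extended
    (σ r b : ℝ) (hσ : σ ≠ 0) (hr : r ≠ 1)
    (x y z : ℝ → ℝ)
    (hx : ∀ t, HasDerivAt x (-σ * (x t - y t)) t)
    (hy : ∀ t, HasDerivAt y (r * x t - y t - x t * z t) t)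
    (hz : ∀ t, HasDerivAt z (-b * z t + x t * y t) t) :
    let X : ℝ → ℝ := fun t => x t / Real.sqrt 2
    let Y : ℝ → ℝ := fun t => σ * (y t - x t) / Real.sqrt 2
    let Z : ℝ → ℝ := fun t => (z t - (x t) ^ 2 / (2 * σ)) / (r - 1)
    let α : ℝ := b
    let β : ℝ := (2 * σ - b) / (σ * (r - 1))
    let γ : ℝ := σ * (r - 1)
    let δ : ℝ := 1
    let lam : ℝ := σ + 1
    (∀ t, HasDerivAt X (Y t) t) ∧
    (∀ t, HasDerivAt Y (-lam * Y t + γ * X t * (1 - Z t) - δ * (X t) ^ 3) t) ∧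
    (∀ t, HasDerivAt Z (-α * Z t + β * (X t) ^ 2) t) :=
  ⟨fun t => hasDerivAt_lorenz_X _ (hx t),
    fun t => hasDerivAt_lorenz_Y hσ hr (hx t) (hy t),
    fun t => hasDerivAt_lorenz_Z hσ hr (hx t) (hz t)⟩
end

section
/- Let x₀(t) = √2 / cosh(t). Then for every t ∈ ℝ, the integral of x₀(v)² e^{v} over v ∈ (-∞, t] equals 4·arctan(e^{t}) - 2/cosh(t). Consequently, for any real β, the function z₁(t) = 2β e^{-t}(2·arctan(e^{t}) - 1/cosh(t)) solves z₁'(t) = -z₁(t) + β x₀(t)² and satisfies z₁(t) → 0 as t → ±∞. -/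
/-! `G t = 2 arctan eᵗ - 1 / cosh t` (`primitiveExpDivCoshSq`) has `G' = eᵗ / cosh² t`,
because `(2 arctan eᵗ)' = 1 / cosh t` and `cosh t + sinh t = eᵗ`. It vanishes at `-∞`, so it is
the primitive `∫_{-∞}^t eᵛ / cosh² v dv`, and `x₀² = 2 / cosh²` gives the integral.
Then `z₁ = 2β e^{-t} G` is the variation-of-constants solution of `z' = -z + β x₀²`.
At `+∞`, `G → π` is bounded, so `z₁ → 0`; at `-∞`, L'Hôpital gives
`G / eᵗ ~ G' / eᵗ = 1 / cosh² t → 0`. -/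

open MeasureTheory Filter Real Set Topology

lemma tendsto_cosh_atTop : Tendsto cosh atTop atTop :=
  tendsto_atTop_mono (fun t => by rw [cosh_eq]; linarith [exp_pos (-t)])
    (tendsto_exp_atTop.atTop_div_const two_pos)

lemma tendsto_cosh_atBot : Tendsto cosh atBot atTop := by
  simpa [Function.comp_def] using tendsto_cosh_atTop.comp tendsto_neg_atBot_atTop

lemma hasDerivAt_two_mul_arctan_exp (t : ℝ) :
    HasDerivAt (fun t => 2 * arctan (exp t)) (cosh t)⁻¹ t := by
  refine (((hasDerivAt_arctan _).comp t (hasDerivAt_exp t)).const_mul 2).congr_deriv ?_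
  rw [cosh_eq, exp_neg]
  field_simp
  ring

noncomputable def primitiveExpDivCoshSq (t : ℝ) : ℝ := 2 * arctan (exp t) - 1 / cosh t

lemma hasDerivAt_primitiveExpDivCoshSq (t : ℝ) :
    HasDerivAt primitiveExpDivCoshSq (exp t / cosh t ^ 2) t := by
  have h := (hasDerivAt_two_mul_arctan_exp t).sub ((hasDerivAt_cosh t).inv (cosh_pos t).ne')
  simp only [← one_div] at h
  refine h.congr_deriv ?_
  rw [← cosh_add_sinh]
  field_simp [(cosh_pos t).ne']
  ring

lemma tendsto_primitiveExpDivCoshSq_atBot : Tendsto primitiveExpDivCoshSq atBot (𝓝 0) := by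
  have harctan : Tendsto (fun t => arctan (exp t)) atBot (𝓝 0) := by
    simpa [Function.comp_def] using (continuous_arctan.tendsto 0).comp tendsto_exp_atBot
  show Tendsto (fun t => 2 * arctan (exp t) - 1 / cosh t) _ _
  simpa using (harctan.const_mul 2).sub tendsto_cosh_atBot.inv_tendsto_atTop

lemma tendsto_primitiveExpDivCoshSq_atTop : Tendsto primitiveExpDivCoshSq atTop (𝓝 π) := by
  have harctan : Tendsto (fun t => arctan (exp t)) atTop (𝓝 (π / 2)) :=
    (tendsto_arctan_atTop.mono_right nhdsWithin_le_nhds).comp tendsto_exp_atTop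
  have := (harctan.const_mul 2).sub tendsto_cosh_atTop.inv_tendsto_atTop
  show Tendsto (fun t => 2 * arctan (exp t) - 1 / cosh t) _ _
  simpa [mul_div_cancel₀] using this

lemma integrableOn_exp_div_cosh_sq_Iic (t : ℝ) :
    IntegrableOn (fun v => exp v / cosh v ^ 2) (Iic t) := by
  have hcont : Continuous fun v => exp v / cosh v ^ 2 :=
    continuous_exp.div (continuous_cosh.pow 2) fun v => pow_ne_zero 2 (cosh_pos v).ne'
  refine (integrableOn_exp_Iic t).mono' hcont.aestronglyMeasurable (ae_of_all _ fun v => ?_)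
  rw [norm_of_nonneg (by positivity)]
  exact div_le_self (exp_pos v).le (one_le_pow₀ (one_le_cosh v))

lemma integral_Iic_exp_div_cosh_sq (t : ℝ) :
    ∫ v in Iic t, exp v / cosh v ^ 2 = primitiveExpDivCoshSq t := by
  rw [integral_Iic_of_hasDerivAt_of_tendsto' (fun v _ => hasDerivAt_primitiveExpDivCoshSq v)
    (integrableOn_exp_div_cosh_sq_Iic t) tendsto_primitiveExpDivCoshSq_atBot, sub_zero]

lemma tendsto_primitiveExpDivCoshSq_div_exp_atBot :
    Tendsto (fun t => primitiveExpDivCoshSq t / exp t) atBot (𝓝 0) := by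
  refine HasDerivAt.lhopital_zero_atBot
    (.of_forall hasDerivAt_primitiveExpDivCoshSq) (.of_forall hasDerivAt_exp)
    (.of_forall fun t => (exp_pos t).ne') tendsto_primitiveExpDivCoshSq_atBot
    tendsto_exp_atBot ?_
  have hcosh_sq : Tendsto (fun t => cosh t ^ 2) atBot atTop :=
    (tendsto_pow_atTop two_ne_zero).comp tendsto_cosh_atBot
  refine hcosh_sq.inv_tendsto_atTop.congr fun t => ?_
  simp only [Pi.inv_apply]
  field_simp [(exp_pos t).ne']

lemma hasDerivAt_exp_neg_mul_primitiveExpDivCoshSq (t : ℝ) :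
    HasDerivAt (fun t => exp (-t) * primitiveExpDivCoshSq t)
      (-(exp (-t) * primitiveExpDivCoshSq t) + 1 / cosh t ^ 2) t := by
  refine ((hasDerivAt_neg t).exp.mul (hasDerivAt_primitiveExpDivCoshSq t)).congr_deriv ?_
  rw [exp_neg]
  field_simp [(exp_pos t).ne']

/-- Explicit first-order correction `z₁` to the `Z`-component of the
homoclinic solution: `∫_{-∞}^{t} x₀(v)² eᵛ dv = 4 arctan eᵗ - 2/cosh t`,
and `z₁(t) = 2β e^{-t}(2 arctan eᵗ - 1/cosh t)` solves
`z₁' = -z₁ + β x₀²` with `z₁ → 0` as `t → ±∞`. -/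
theorem z1_correction (β : ℝ) :
    let x₀ : ℝ → ℝ := fun t => Real.sqrt 2 / Real.cosh t
    let z₁ : ℝ → ℝ := fun t =>
      2 * β * Real.exp (-t) * (2 * Real.arctan (Real.exp t) - 1 / Real.cosh t)
    (∀ t : ℝ, ∫ v in Set.Iic t, (x₀ v) ^ 2 * Real.exp v
        = 4 * Real.arctan (Real.exp t) - 2 / Real.cosh t) ∧
    (∀ t, HasDerivAt z₁ (-z₁ t + β * (x₀ t) ^ 2) t) ∧
    Tendsto z₁ atTop (nhds 0) ∧
    Tendsto z₁ atBot (nhds 0) := by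
  intro x₀ z₁
  have hx₀ : ∀ t, x₀ t ^ 2 = 2 / cosh t ^ 2 := fun t => by
    simp only [x₀, div_pow, sq_sqrt zero_le_two]
  have hz₁ : z₁ = fun t => 2 * β * (exp (-t) * primitiveExpDivCoshSq t) := by
    funext t
    simp only [z₁, primitiveExpDivCoshSq]
    ring
  refine ⟨fun t => ?_, fun t => ?_, ?_, ?_⟩
  · have hintegrand : (fun v => x₀ v ^ 2 * exp v) = fun v => 2 * (exp v / cosh v ^ 2) := by
      funext v
      rw [hx₀]
      ring
    rw [hintegrand, integral_const_mul, integral_Iic_exp_div_cosh_sq, primitiveExpDivCoshSq]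
    ring
  · rw [hz₁, hx₀]
    exact ((hasDerivAt_exp_neg_mul_primitiveExpDivCoshSq t).const_mul (2 * β)).congr_deriv
      (by ring)
  · rw [hz₁]
    simpa using (tendsto_exp_neg_atTop_nhds_zero.mul
      tendsto_primitiveExpDivCoshSq_atTop).const_mul (2 * β)
  · rw [hz₁]
    simpa [exp_neg, div_eq_inv_mul] using
      tendsto_primitiveExpDivCoshSq_div_exp_atBot.const_mul (2 * β)
end

section
/- Let x₀(t) = √2 / cosh(t). Then ∫_{-∞}^{+∞} x₀'(s) · x₀(s) · e^{-s} · ( ∫_{-∞}^{s} x₀(v)² e^{v} dv ) ds = π² - 32/3. Equivalently, ∫_{-∞}^{+∞} (-4) · (sinh(s)/cosh³(s)) · e^{-s} · (2·arctan(e^{s}) - 1/cosh(s)) ds = π² - 32/3. -/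
/-!
The inner integral has the closed form `4 arctan (eˢ) - 2 / cosh s`, which turns the first
integrand into the second one. In the variable `u = eˢ` the second integrand is `F'(u) du` with
`F'(u) = 32 (1 - u²) / (1 + u²)³ · (arctan u - u / (1 + u²))`, whose explicit primitive `F`
satisfies `F(0) = 32/3` and `F(u) → π²` as `u → ∞`. The integrand is integrable since it is
bounded by `8π / cosh s ≤ 32π / (1 + s²)`.
-/

open Real Filter Set Topology MeasureTheory

theorem Real.one_add_sq_le_four_mul_cosh (x : ℝ) : 1 + x ^ 2 ≤ 4 * cosh x := by
  have hquad := quadratic_le_exp_of_nonneg (abs_nonneg x)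
  have hcosh : exp |x| ≤ 2 * cosh x := by
    rw [← cosh_abs, cosh_eq]
    linarith [exp_pos (-|x|)]
  nlinarith [sq_abs x, abs_nonneg x]

theorem Real.integrable_inv_cosh : Integrable fun x : ℝ => (cosh x)⁻¹ := by
  refine (integrable_inv_one_add_sq.const_mul 4).mono' (by fun_prop)
    (ae_of_all _ fun x => ?_)
  rw [norm_inv, norm_of_nonneg (cosh_pos x).le, ← div_eq_mul_inv,
    le_div_iff₀ (by positivity), ← div_eq_inv_mul, div_le_iff₀ (cosh_pos x)]
  linarith [one_add_sq_le_four_mul_cosh x]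

theorem Real.abs_sinh_le_cosh (x : ℝ) : |sinh x| ≤ cosh x := by
  rw [abs_sinh, ← cosh_abs]
  exact (sinh_lt_cosh _).le

theorem Real.exp_neg_le_two_mul_cosh (x : ℝ) : exp (-x) ≤ 2 * cosh x := by
  rw [cosh_eq]
  linarith [exp_pos x]

theorem Real.inv_cosh_eq (x : ℝ) : (cosh x)⁻¹ = 2 * exp x / (exp x ^ 2 + 1) := by
  rw [cosh_eq, exp_neg]
  field_simp

theorem integral_Iic_sq_sqrt_two_div_cosh_mul_exp (s : ℝ) :
    ∫ v in Iic s, (√2 / cosh v) ^ 2 * exp v = 4 * arctan (exp s) - 2 / cosh s := by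
  have hsq (v : ℝ) : (√2 / cosh v) ^ 2 * exp v = 2 * (cosh v ^ 2)⁻¹ * exp v := by
    rw [div_pow, sq_sqrt zero_le_two, div_eq_mul_inv]
  have hderiv (v : ℝ) : HasDerivAt (fun v => 4 * arctan (exp v) - 2 / cosh v)
      ((√2 / cosh v) ^ 2 * exp v) v := by
    have H := (((hasDerivAt_arctan _).comp v (hasDerivAt_exp v)).const_mul 4).sub
      ((hasDerivAt_const v 2).div (hasDerivAt_cosh v) (cosh_pos v).ne')
    refine H.congr_deriv ?_
    rw [hsq, sinh_eq, cosh_eq, exp_neg]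
    field_simp
    ring
  have hint : IntegrableOn (fun v => (√2 / cosh v) ^ 2 * exp v) (Iic s) := by
    refine ((integrableOn_exp_Iic s).const_mul 2).mono' (by fun_prop) (ae_of_all _ fun v => ?_)
    rw [hsq, norm_of_nonneg (by positivity)]
    have hsech_sq : (cosh v ^ 2)⁻¹ ≤ 1 :=
      inv_le_one_of_one_le₀ (one_le_pow₀ (one_le_cosh v))
    nlinarith [exp_pos v]
  have hbot : Tendsto (fun v => 4 * arctan (exp v) - 2 / cosh v) atBot (𝓝 0) := by
    have hcont : Continuous fun u => 4 * arctan u - 4 * u / (u ^ 2 + 1) := by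
      fun_prop (disch := intro; positivity)
    convert (hcont.tendsto 0).comp tendsto_exp_atBot using 1
    · ext v
      rw [Function.comp_apply, div_eq_mul_inv 2 (cosh v), inv_cosh_eq]
      ring
    · simp
  rw [integral_Iic_of_hasDerivAt_of_tendsto' (fun v _ => hderiv v) hint hbot, sub_zero]

namespace MelnikovBeta

noncomputable def integrand (s : ℝ) : ℝ :=
  (-4) * (sinh s / (cosh s) ^ 3) * exp (-s) * (2 * arctan (exp s) - 1 / cosh s)

noncomputable def primitive (u : ℝ) : ℝ :=
  4 * arctan u ^ 2 + 8 * u * (u ^ 2 + 3) * arctan u / (u ^ 2 + 1) ^ 2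
    + 4 / (u ^ 2 + 1) - 4 / (u ^ 2 + 1) ^ 2 + 32 / (3 * (u ^ 2 + 1) ^ 3)

theorem hasDerivAt_primitive (u : ℝ) :
    HasDerivAt primitive
      (32 * (1 - u ^ 2) / (u ^ 2 + 1) ^ 3 * (arctan u - u / (u ^ 2 + 1))) u := by
  have hw : u ^ 2 + 1 ≠ 0 := by positivity
  have hA := hasDerivAt_arctan u
  have hW : HasDerivAt (fun t => t ^ 2 + 1) (2 * u) u := by
    simpa using (hasDerivAt_pow 2 u).add_const 1
  have H : HasDerivAt primitive _ u := (((((hA.pow 2).const_mul 4).add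
    ((((hasDerivAt_id u).const_mul 8).mul ((hasDerivAt_pow 2 u).add_const 3)).mul hA |>.div
      (hW.pow 2) (pow_ne_zero 2 hw))).add
    ((hasDerivAt_const u 4).div hW hw)).sub
    ((hasDerivAt_const u 4).div (hW.pow 2) (pow_ne_zero 2 hw))).add
    ((hasDerivAt_const u 32).div ((hW.pow 3).const_mul 3)
      (mul_ne_zero three_ne_zero (pow_ne_zero 3 hw)))
  refine H.congr_deriv ?_
  simp only [Pi.pow_apply, Pi.mul_apply, id]
  rw [add_comm 1 (u ^ 2)]
  field_simp
  ring

theorem hasDerivAt_primitive_exp (s : ℝ) :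
    HasDerivAt (fun t => primitive (exp t)) (integrand s) s := by
  refine ((hasDerivAt_primitive _).comp s (hasDerivAt_exp s)).congr_deriv ?_
  rw [integrand, sinh_eq, cosh_eq, exp_neg]
  field_simp
  ring

theorem tendsto_primitive_exp_atBot :
    Tendsto (fun s => primitive (exp s)) atBot (𝓝 (32 / 3)) := by
  have hcont : Continuous primitive := by
    unfold primitive
    fun_prop (disch := intro; positivity)
  have h0 : primitive 0 = 32 / 3 := by norm_num [primitive]
  exact h0 ▸ (hcont.tendsto 0).comp tendsto_exp_atBot

theorem tendsto_primitive_atTop : Tendsto primitive atTop (𝓝 (π ^ 2)) := by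
  -- `arctan t⁻¹ = π / 2 - arctan t` makes `primitive t⁻¹` continuous at `t = 0`
  set g : ℝ → ℝ := fun t => 4 * (π / 2 - arctan t) ^ 2
    + 8 * (t + 3 * t ^ 3) * (π / 2 - arctan t) / (1 + t ^ 2) ^ 2
    + 4 * t ^ 2 / (1 + t ^ 2) - 4 * t ^ 4 / (1 + t ^ 2) ^ 2 + 32 * t ^ 6 / (3 * (1 + t ^ 2) ^ 3)
  have hcont : Continuous g := by fun_prop (disch := intro; positivity)
  have hg : ∀ u > 0, primitive u = g u⁻¹ := fun u hu => by
    have harctan : π / 2 - arctan u⁻¹ = arctan u := by rw [arctan_inv_of_pos hu]; ring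
    simp only [g, harctan, primitive]
    field_simp
  have hlim := (hcont.tendsto 0).comp (tendsto_inv_atTop_nhdsGT_zero.mono_right nhdsWithin_le_nhds)
  refine (hlim.congr' ((eventually_gt_atTop 0).mono fun u hu => (hg u hu).symm)).trans ?_
  simp only [g]
  norm_num
  ring

theorem abs_integrand_le (s : ℝ) : |integrand s| ≤ 8 * π * (cosh s)⁻¹ := by
  have hc := cosh_pos s
  have hbracket : |2 * arctan (exp s) - 1 / cosh s| ≤ π := by
    have hsech : 1 / cosh s ≤ 1 := (div_le_one hc).2 (one_le_cosh s)
    have hsech_pos : 0 < 1 / cosh s := by positivity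
    rw [abs_le]
    constructor <;>
      linarith [arctan_lt_pi_div_two (exp s), arctan_pos.2 (exp_pos s), pi_gt_three]
  calc |integrand s|
      = 4 * (|sinh s| / cosh s ^ 3) * exp (-s) * |2 * arctan (exp s) - 1 / cosh s| := by
        rw [integrand, abs_mul, abs_mul, abs_mul, abs_div, abs_of_pos (exp_pos _),
          abs_pow, abs_of_pos hc]
        norm_num
    _ ≤ 4 * (cosh s / cosh s ^ 3) * (2 * cosh s) * π := by
        gcongr
        exacts [abs_sinh_le_cosh s, exp_neg_le_two_mul_cosh s]
    _ = 8 * π * (cosh s)⁻¹ := by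
        field_simp
        ring

theorem integrable_integrand : Integrable integrand :=
  (integrable_inv_cosh.const_mul (8 * π)).mono'
    (by unfold integrand; fun_prop (disch := intro; positivity)) (ae_of_all _ abs_integrand_le)

theorem integral_integrand : ∫ s, integrand s = π ^ 2 - 32 / 3 :=
  integral_of_hasDerivAt_of_tendsto hasDerivAt_primitive_exp integrable_integrand
    tendsto_primitive_exp_atBot (tendsto_primitive_atTop.comp tendsto_exp_atTop)

end MelnikovBeta

/-- The coefficient of `β` in the Melnikov-type functional:
`∫_{-∞}^{∞} x₀'(s) x₀(s) e^{-s} (∫_{-∞}^{s} x₀(v)² eᵛ dv) ds = π² - 32/3`. -/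
theorem melnikov_beta_coefficient :
    let x₀ : ℝ → ℝ := fun t => Real.sqrt 2 / Real.cosh t
    (∫ s : ℝ, deriv x₀ s * x₀ s * Real.exp (-s) *
        ∫ v in Set.Iic s, (x₀ v) ^ 2 * Real.exp v) = Real.pi ^ 2 - 32 / 3 ∧
    (∫ s : ℝ, (-4) * (Real.sinh s / (Real.cosh s) ^ 3) * Real.exp (-s) *
        (2 * Real.arctan (Real.exp s) - 1 / Real.cosh s)) = Real.pi ^ 2 - 32 / 3 := by
  intro x₀
  have hderiv (s : ℝ) : HasDerivAt x₀ (-(√2 * sinh s) / cosh s ^ 2) s := by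
    refine ((hasDerivAt_const s √2).div (hasDerivAt_cosh s) (cosh_pos s).ne').congr_deriv ?_
    ring
  have hintegrand (s : ℝ) :
      deriv x₀ s * x₀ s * exp (-s) * ∫ v in Iic s, x₀ v ^ 2 * exp v =
        MelnikovBeta.integrand s := by
    rw [(hderiv s).deriv]
    simp only [x₀]
    rw [integral_Iic_sq_sqrt_two_div_cosh_mul_exp, MelnikovBeta.integrand]
    have hc := cosh_pos s
    field_simp
    rw [sq_sqrt zero_le_two]
    ring
  simp_rw [hintegrand]
  exact ⟨MelnikovBeta.integral_integrand, MelnikovBeta.integral_integrand⟩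
end

section
/- Let C : ℝ → Matrix (Fin 3) (Fin 3) ℝ be continuous, and let ξ₁, ξ₂ : ℝ → ℝ³ be differentiable functions satisfying ξᵢ'(t) = C(t) ξᵢ(t) (i = 1, 2) for all t. Then the cross product η(t) = ξ₁(t) × ξ₂(t) is differentiable and satisfies the linear ODE η'(t) = D(t) η(t), where D(t) = trace(C(t)) · Id - C(t)ᵀ. -/
open Matrix

theorem HasDerivAt.crossProduct {𝕜 : Type*} [NontriviallyNormedField 𝕜] [CompleteSpace 𝕜]
    {u v : 𝕜 → Fin 3 → 𝕜} {u' v' : Fin 3 → 𝕜} {x : 𝕜}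
    (hu : HasDerivAt u u' x) (hv : HasDerivAt v v' x) :
    HasDerivAt (fun s => u s ⨯₃ v s) (u' ⨯₃ v x + u x ⨯₃ v') x := by
  rw [add_comm]
  exact (_root_.crossProduct (R := 𝕜)).toContinuousBilinearMap.hasDerivAt_of_bilinear
    (fun _ => hu) (fun _ => hv)

-- The derivative at `A = 1` of the cofactor identity `(A u) × (A v) = (adj A)ᵀ (u × v)`.
theorem Matrix.mulVec_cross_add_cross_mulVec {R : Type*} [CommRing R]
    (A : Matrix (Fin 3) (Fin 3) R) (u v : Fin 3 → R) :
    (A *ᵥ u) ⨯₃ v + u ⨯₃ (A *ᵥ v) = (A.trace • (1 : Matrix (Fin 3) (Fin 3) R) - Aᵀ) *ᵥ (u ⨯₃ v) := by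
  ext i
  fin_cases i <;>
  · simp only [cross_apply, mulVec, dotProduct, Fin.sum_univ_three, trace, diag_apply, Pi.add_apply,
      sub_apply, smul_apply, smul_eq_mul, transpose_apply, one_apply_eq, one_apply_ne, ne_eq,
      Fin.reduceEq, not_false_eq_true, Fin.isValue, Fin.zero_eta, Fin.mk_one, Fin.reduceFinMk,
      cons_val_zero, cons_val_one, cons_val]
    ring

theorem cross_product_evolution_general
    (C : ℝ → Matrix (Fin 3) (Fin 3) ℝ)
    (ξ₁ ξ₂ : ℝ → Fin 3 → ℝ)
    (h₁ : ∀ t, HasDerivAt ξ₁ (C t *ᵥ ξ₁ t) t)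
    (h₂ : ∀ t, HasDerivAt ξ₂ (C t *ᵥ ξ₂ t) t) :
    ∀ t, HasDerivAt (fun s => crossProduct (ξ₁ s) (ξ₂ s))
      (((Matrix.trace (C t)) • (1 : Matrix (Fin 3) (Fin 3) ℝ) - (C t)ᵀ) *ᵥ
        crossProduct (ξ₁ t) (ξ₂ t)) t := fun t =>
  mulVec_cross_add_cross_mulVec (C t) (ξ₁ t) (ξ₂ t) ▸ (h₁ t).crossProduct (h₂ t)

/-- Evolution of the cross product of two solutions of a nonautonomous
linear system `ξ' = C(t) ξ`: it satisfies `η' = D(t) η` with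
`D(t) = tr C(t) · Id - C(t)ᵀ`. -/
theorem cross_product_evolution
    (C : ℝ → Matrix (Fin 3) (Fin 3) ℝ) (hC : Continuous C)
    (ξ₁ ξ₂ : ℝ → Fin 3 → ℝ)
    (h₁ : ∀ t, HasDerivAt ξ₁ (C t *ᵥ ξ₁ t) t)
    (h₂ : ∀ t, HasDerivAt ξ₂ (C t *ᵥ ξ₂ t) t) :
    ∀ t, HasDerivAt (fun s => crossProduct (ξ₁ s) (ξ₂ s))
      (((Matrix.trace (C t)) • (1 : Matrix (Fin 3) (Fin 3) ℝ) - (C t)ᵀ) *ᵥ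
        crossProduct (ξ₁ t) (ξ₂ t)) t :=
  cross_product_evolution_general C ξ₁ ξ₂ h₁ h₂
end

section
/- Let x₀(t) = √2/cosh(t), y₁(t) = -(sinh(t)/cosh²(t))e^{-t}, and v₃⁰(t) = (1/(4√2))(π + 4·arctan(tanh(t/2)) + (2/cosh(t))(2 - tanh(t))). Then ∫_{-∞}^{+∞} y₁(t)·x₀(t)·v₃⁰(t)·e^{2t} dt = -(32 + 3π²)/24. -/
/-!
Substitute `ψ = gd t = arctan (sinh t)`, the Gudermannian function: it maps `ℝ` bijectively
onto `(-π/2, π/2)` with `dψ = sech t dt`, `cos ψ = sech t`, `sin ψ = tanh t`, and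
`π + 4 arctan (tanh (t/2)) = π + 2ψ`. Together with `e^t sech t = 1 + tanh t` the integrand
becomes `sech t` times a polynomial in `ψ`, `sin ψ`, `cos ψ`, whose integral over
`(-π/2, π/2)` is computed from an explicit primitive. The change of variables formula for
injective maps holds without any integrability hypothesis, so no tail estimate is needed.
-/

open MeasureTheory Real Set

noncomputable def gudermannian (t : ℝ) : ℝ := arctan (sinh t)

lemma cos_gudermannian (t : ℝ) : cos (gudermannian t) = (cosh t)⁻¹ := by
  rw [gudermannian, cos_arctan, ← cosh_sq', sqrt_sq (cosh_pos t).le, one_div]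

lemma sin_gudermannian (t : ℝ) : sin (gudermannian t) = tanh t := by
  rw [gudermannian, sin_arctan, ← cosh_sq', sqrt_sq (cosh_pos t).le, tanh_eq_sinh_div_cosh]

lemma hasDerivAt_gudermannian (t : ℝ) : HasDerivAt gudermannian (cosh t)⁻¹ t := by
  refine (hasDerivAt_sinh t).arctan.congr_deriv ?_
  rw [← cosh_sq']
  field_simp

lemma gudermannian_injective : Function.Injective gudermannian :=
  arctan_injective.comp sinh_injective

lemma range_gudermannian : range gudermannian = Ioo (-(π / 2)) (π / 2) := by
  rw [show gudermannian = arctan ∘ sinh from rfl, range_comp, sinh_surjective.range_eq,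
    image_univ, range_arctan]

lemma two_mul_arctan_tanh_half (t : ℝ) : 2 * arctan (tanh (t / 2)) = gudermannian t := by
  have hx : tanh (t / 2) * tanh (t / 2) < 1 := by nlinarith [tanh_sq_lt_one (t / 2)]
  have hc := cosh_pos (t / 2)
  rw [two_mul, arctan_add hx, gudermannian, tanh_eq_sinh_div_cosh]
  congr 1
  conv_rhs => rw [show t = 2 * (t / 2) by ring, sinh_two_mul]
  have := cosh_sq_sub_sinh_sq (t / 2)
  field_simp
  linear_combination (-2 * sinh (t / 2)) * this

theorem integral_inv_cosh_smul_comp_gudermannian {E : Type*} [NormedAddCommGroup E]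
    [NormedSpace ℝ E] (g : ℝ → E) :
    ∫ t, (cosh t)⁻¹ • g (gudermannian t) = ∫ ψ in -(π / 2)..π / 2, g ψ := by
  have h := integral_image_eq_integral_abs_deriv_smul MeasurableSet.univ
    (fun t _ => (hasDerivAt_gudermannian t).hasDerivWithinAt) gudermannian_injective.injOn g
  rw [image_univ, range_gudermannian, Measure.restrict_univ] at h
  rw [intervalIntegral.integral_of_le (by linarith [pi_pos]), integral_Ioc_eq_integral_Ioo, h]
  simp_rw [abs_of_pos (inv_pos.2 (cosh_pos _))]

/-- The integrand `y₁ x₀ v₃⁰ e^{2t}` divided by `sech t`, in the variable `ψ = gd t`. -/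
noncomputable def integrandGd (ψ : ℝ) : ℝ :=
  -(1 / 4) * (1 + sin ψ) * sin ψ * (π + 2 * ψ + 2 * cos ψ * (2 - sin ψ))

noncomputable def primitiveGd (ψ : ℝ) : ℝ :=
  -(1 / 4) * ((π + 2 * ψ) * (-cos ψ - sin ψ * cos ψ / 2) + ψ * (π + ψ) / 2 + 2 * sin ψ +
    5 / 2 * sin ψ ^ 2 + 2 / 3 * sin ψ ^ 3 - 1 / 2 * sin ψ ^ 4)

lemma hasDerivAt_primitiveGd (ψ : ℝ) : HasDerivAt primitiveGd (integrandGd ψ) ψ := by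
  have hs := hasDerivAt_sin ψ
  have hc := hasDerivAt_cos ψ
  have hl : HasDerivAt (fun ψ : ℝ => π + 2 * ψ) 2 ψ := by
    simpa using ((hasDerivAt_id ψ).const_mul 2).const_add π
  have hq : HasDerivAt (fun ψ : ℝ => ψ * (π + ψ)) (π + 2 * ψ) ψ :=
    ((hasDerivAt_id' ψ).mul ((hasDerivAt_id' ψ).const_add π)).congr_deriv (by ring)
  have h := ((((((hl.mul (hc.neg.sub ((hs.mul hc).div_const 2))).add (hq.div_const 2)).add
    (hs.const_mul 2)).add ((hs.pow 2).const_mul (5 / 2))).add ((hs.pow 3).const_mul (2 / 3))).sub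
    ((hs.pow 4).const_mul (1 / 2))).const_mul (-(1 / 4))
  refine (h.congr_deriv ?_).congr_of_eventuallyEq (Filter.Eventually.of_forall fun x => ?_)
  · simp only [integrandGd, Pi.sub_apply, Pi.neg_apply, Pi.mul_apply]
    linear_combination (π / 8 + ψ / 4) * sin_sq_add_cos_sq ψ
  · simp only [primitiveGd, Pi.add_apply, Pi.sub_apply, Pi.mul_apply, Pi.neg_apply, Pi.pow_apply]

lemma integral_integrandGd :
    ∫ ψ in -(π / 2)..π / 2, integrandGd ψ = -(32 + 3 * π ^ 2) / 24 := by
  rw [intervalIntegral.integral_eq_sub_of_hasDerivAt (fun ψ _ => hasDerivAt_primitiveGd ψ)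
    ((by unfold integrandGd; fun_prop : Continuous integrandGd).intervalIntegrable _ _)]
  simp only [primitiveGd, sin_neg, cos_neg, sin_pi_div_two, cos_pi_div_two]
  ring

lemma y1_x0_v30_eq (t : ℝ) :
    -(sinh t / cosh t ^ 2) * exp (-t) * (√2 / cosh t) *
        (1 / (4 * √2) * (π + 4 * arctan (tanh (t / 2)) + 2 / cosh t * (2 - tanh t))) *
        exp (2 * t) =
      (cosh t)⁻¹ • integrandGd (gudermannian t) := by
  have hc := (cosh_pos t).ne'
  have he : cosh t + sinh t ≠ 0 := by rw [cosh_add_sinh]; exact (exp_pos t).ne'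
  rw [smul_eq_mul, integrandGd, sin_gudermannian, cos_gudermannian, ← two_mul_arctan_tanh_half,
    tanh_eq_sinh_div_cosh t, two_mul t, exp_add, exp_neg, ← cosh_add_sinh]
  field_simp
  ring

/-- The integral `∫ y₁ x₀ v₃⁰ e^{2t} dt = -(32 + 3π²)/24` entering the
first-order coefficient of the separatrix value. -/
theorem integral_y1_x0_v30 :
    let x₀ : ℝ → ℝ := fun t => Real.sqrt 2 / Real.cosh t
    let y₁ : ℝ → ℝ := fun t => -(Real.sinh t / (Real.cosh t) ^ 2) * Real.exp (-t)
    let v₃ : ℝ → ℝ := fun t => (1 / (4 * Real.sqrt 2)) *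
      (Real.pi + 4 * Real.arctan (Real.tanh (t / 2)) +
        (2 / Real.cosh t) * (2 - Real.tanh t))
    (∫ t : ℝ, y₁ t * x₀ t * v₃ t * Real.exp (2 * t))
      = -(32 + 3 * Real.pi ^ 2) / 24 := by
  intro x₀ y₁ v₃
  simp only [x₀, y₁, v₃, y1_x0_v30_eq, integral_inv_cosh_smul_comp_gudermannian,
    integral_integrandGd]
end
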